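/- arXiv:2005.05364 — 2 statements merged into one kernel-verified Lean document; each statement's English description precedes it below -/
import Mathlib

section
/- For every n ≥ 1, every vector d ∈ [0,1)^n, and every index j ∈ {1,...,n} with d_j = 0, the matrix B(d) := diag(1−d_1,...,1−d_n) + d·1ᵀ is invertible and the j-th column sum of its inverse equals Σ_{i=1}^n (B(d)^{-1})_{ij} = 1 / (1 + Σ_{k=1}^n d_k/(1−d_k)). -/
/-!
Write `B = diag(D) + d·1ᵀ` with `D = 1 − d` and `S = 1 + ∑ₖ dₖ/Dₖ`. Factoring out `diag(D)`, the
matrix determinant lemma gives `det B = (∏ₖ Dₖ) · S ≠ 0`. The row vector `wₖ = 1/(Dₖ S)` satisfies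
`w B = 1ᵀ`, because `wₖ Dₖ = 1/S` and `w · d = (S − 1)/S`; hence the column sums `1ᵀ B⁻¹` are `w`,
and at an index with `dⱼ = 0` this is `1/S`.
-/

noncomputable section

open Matrix

/-- The matrix `B(d) = diag(1−d₁,...,1−dₙ) + d·1ᵀ`, i.e. `B(d)ᵢⱼ = (1−dᵢ)δᵢⱼ + dᵢ`. -/
def Bmat (n : ℕ) (d : Fin n → ℝ) : Matrix (Fin n) (Fin n) ℝ :=
  Matrix.of fun i j => (if i = j then 1 - d i else 0) + d i

namespace Matrix

variable {ι K : Type*} [Fintype ι] [DecidableEq ι] [Field K]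

theorem diagonal_add_vecMulVec_one_eq_diagonal_mul {D : ι → K} (hD : ∀ i, D i ≠ 0)
    (d : ι → K) :
    diagonal D + vecMulVec d 1 = diagonal D * (1 + vecMulVec (d / D) 1) := by
  ext i k
  rw [Matrix.mul_add, Matrix.mul_one, add_apply, add_apply, diagonal_mul, vecMulVec_apply,
    vecMulVec_apply, Pi.div_apply, ← mul_assoc, mul_div_cancel₀ _ (hD i)]

theorem det_diagonal_add_vecMulVec_one {D : ι → K} (hD : ∀ i, D i ≠ 0) (d : ι → K) :
    (diagonal D + vecMulVec d 1).det = (∏ i, D i) * (1 + ∑ i, d i / D i) := by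
  rw [diagonal_add_vecMulVec_one_eq_diagonal_mul hD, det_mul, det_diagonal, vecMulVec_eq Unit,
    det_one_add_replicateCol_mul_replicateRow]
  simp [dotProduct]

theorem isUnit_det_diagonal_add_vecMulVec_one {D : ι → K} (hD : ∀ i, D i ≠ 0) (d : ι → K)
    (hS : 1 + ∑ i, d i / D i ≠ 0) : IsUnit (diagonal D + vecMulVec d 1).det := by
  rw [det_diagonal_add_vecMulVec_one hD, isUnit_iff_ne_zero]
  exact mul_ne_zero (Finset.prod_ne_zero_iff.mpr fun i _ => hD i) hS

theorem vecMul_diagonal_add_vecMulVec_one {D : ι → K} (hD : ∀ i, D i ≠ 0) (d : ι → K)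
    (hS : 1 + ∑ i, d i / D i ≠ 0) :
    (fun k => 1 / (D k * (1 + ∑ i, d i / D i))) ᵥ* (diagonal D + vecMulVec d 1) = 1 := by
  set S := 1 + ∑ i, d i / D i with hS_def
  have hdot : (fun k => 1 / (D k * S)) ⬝ᵥ d = (S - 1) / S := by
    rw [hS_def, add_sub_cancel_left, Finset.sum_div]
    exact Finset.sum_congr rfl fun i _ => by field_simp [hD i, hS]
  ext k
  rw [vecMul_add, vecMul_vecMulVec, hdot, Pi.add_apply, vecMul_diagonal]
  simp only [Pi.smul_apply, Pi.one_apply, smul_eq_mul, mul_one]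
  field_simp [hD k, hS]
  ring

theorem one_vecMul_inv_diagonal_add_vecMulVec_one {D : ι → K} (hD : ∀ i, D i ≠ 0)
    (d : ι → K)
    (hS : 1 + ∑ i, d i / D i ≠ 0) :
    1 ᵥ* (diagonal D + vecMulVec d 1)⁻¹ = fun k => 1 / (D k * (1 + ∑ i, d i / D i)) := by
  set w : ι → K := fun k => 1 / (D k * (1 + ∑ i, d i / D i))
  calc 1 ᵥ* (diagonal D + vecMulVec d 1)⁻¹
      = (w ᵥ* (diagonal D + vecMulVec d 1)) ᵥ* (diagonal D + vecMulVec d 1)⁻¹ := by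
        rw [vecMul_diagonal_add_vecMulVec_one hD d hS]
    _ = w := by
        rw [vecMul_vecMul, mul_nonsing_inv _ (isUnit_det_diagonal_add_vecMulVec_one hD d hS),
          vecMul_one]

end Matrix

theorem Bmat_eq_diagonal_add_vecMulVec (n : ℕ) (d : Fin n → ℝ) :
    Bmat n d = diagonal (1 - d) + vecMulVec d 1 := by
  ext i k
  by_cases h : i = k <;> simp [Bmat, diagonal, vecMulVec, h]

theorem Bmat_inv_column_sum_general
    (n : ℕ) (d : Fin n → ℝ) (hd : ∀ i, d i ∈ Set.Ico (0 : ℝ) 1)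
    (j : Fin n) (hj : d j = 0) :
    IsUnit (Bmat n d) ∧
    (∑ i, (Bmat n d)⁻¹ i j) = 1 / (1 + ∑ k, d k / (1 - d k)) := by
  have hD : ∀ i, (1 - d) i ≠ 0 := fun i => sub_ne_zero.mpr (hd i).2.ne'
  have hS : 0 < 1 + ∑ k, d k / (1 - d k) := by
    have : 0 ≤ ∑ k, d k / (1 - d k) :=
      Finset.sum_nonneg fun k _ => div_nonneg (hd k).1 (sub_nonneg.mpr (hd k).2.le)
    linarith
  rw [Bmat_eq_diagonal_add_vecMulVec]
  refine ⟨?_, ?_⟩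
  · exact (isUnit_iff_isUnit_det _).mpr (isUnit_det_diagonal_add_vecMulVec_one hD d hS.ne')
  · have := congrFun (one_vecMul_inv_diagonal_add_vecMulVec_one hD d hS.ne') j
    simpa [vecMul, dotProduct, hj] using this

/-- for `d ∈ [0,1)ⁿ` and an index `j` with `dⱼ = 0`, `B(d)` is invertible
and the `j`-th column sum of its inverse equals `1 / (1 + ∑ₖ dₖ/(1−dₖ))`. -/
theorem Bmat_inv_column_sum
    (n : ℕ) (hn : 1 ≤ n) (d : Fin n → ℝ) (hd : ∀ i, d i ∈ Set.Ico (0 : ℝ) 1)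
    (j : Fin n) (hj : d j = 0) :
    IsUnit (Bmat n d) ∧
    (∑ i, (Bmat n d)⁻¹ i j) = 1 / (1 + ∑ k, d k / (1 - d k)) :=
  Bmat_inv_column_sum_general n d hd j hj
end
end

section
/- Consider n = 2 banks with repo rate r = 0, identical holdings a > 0 and identical shortfall h with 0.5·a < h < 0.7·a; let f̄_1(s) = f̄_2(s) = 1 − (s_1+s_2)/(4a) and g(s) = 0.7 − s/(4a). Then there exist (at least) two distinct clearing solutions: (i) s** = (0,0) with prices (q**, q̄_1**, q̄_2**) = (0.7, 1, 1), and (ii) s** = (a,a) with prices (q**, q̄_1**, q̄_2**) = (0.2, 0.5, 0.5). In particular, the clearing solution is not unique. -/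
noncomputable section

/-- The domain `D = ∏ [0, aᵢ]` of admissible liquidation vectors. -/
def memD (n : ℕ) (a s : Fin n → ℝ) : Prop := ∀ i, s i ∈ Set.Icc 0 (a i)

/-- Bank `i`'s cost: realized loss from sales plus interest on the borrowed amount. -/
def obj (n : ℕ) (r : ℝ) (h : Fin n → ℝ) (fbar : Fin n → (Fin n → ℝ) → ℝ)
    (i : Fin n) (s : Fin n → ℝ) : ℝ :=
  s i * (1 - fbar i s) + r * (h i - s i * fbar i s)

/-- Feasibility in problem (P2) with fixed prices `(q, q̄)`. -/
def feasP2 (n : ℕ) (a h : Fin n → ℝ) (q : ℝ) (qb : Fin n → ℝ) (i : Fin n) (x : ℝ) : Prop :=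
  x ∈ Set.Icc 0 (a i) ∧ x ≤ h i / qb i ∧ (h i - a i * q) / (qb i - q) ≤ x

/-- `s` is a Nash equilibrium of problem (P2) at fixed prices `(q, q̄)`. -/
def NashP2 (n : ℕ) (a h : Fin n → ℝ) (r q : ℝ) (qb : Fin n → ℝ)
    (fbar : Fin n → (Fin n → ℝ) → ℝ) (s : Fin n → ℝ) : Prop :=
  ∀ i : Fin n,
    (h i ≤ a i * qb i →
      feasP2 n a h q qb i (s i) ∧
      ∀ x : ℝ, feasP2 n a h q qb i x →
        obj n r h fbar i s ≤ obj n r h fbar i (Function.update s i x)) ∧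
    (a i * qb i < h i → s i = a i)

/-! With `r = 0` a bank's cost is `sᵢ (1 - f̄ᵢ(s))`, nonnegative as long as `f̄ᵢ ≤ 1`, so selling
nothing is an equilibrium whenever it is feasible, i.e. whenever the fire-sale value `aᵢ q` of the
holdings covers the shortfall. At the depressed prices of `(a, a)`, instead, even the average price
cannot cover it, `aᵢ q̄ᵢ < hᵢ`, and every bank is forced to liquidate everything. Both price systems
are consistent with `g` and `f̄`. -/

section NashP2

variable {n : ℕ} {a h : Fin n → ℝ} {q : ℝ} {qb : Fin n → ℝ}

theorem obj_zero_rate (h : Fin n → ℝ) (fbar : Fin n → (Fin n → ℝ) → ℝ) (i : Fin n)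
    (s : Fin n → ℝ) : obj n 0 h fbar i s = s i * (1 - fbar i s) := by
  simp [obj]

theorem feasP2_zero {i : Fin n} (ha : 0 ≤ a i) (hh : 0 ≤ h i) (hqb : 0 ≤ qb i)
    (hcover : h i ≤ a i * q) (hq : q < qb i) : feasP2 n a h q qb i 0 :=
  ⟨⟨le_rfl, ha⟩, div_nonneg hh hqb,
    div_nonpos_of_nonpos_of_nonneg (by linarith) (by linarith)⟩

theorem nashP2_zero {fbar : Fin n → (Fin n → ℝ) → ℝ} (ha : ∀ i, 0 ≤ a i) (hh : ∀ i, 0 ≤ h i)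
    (hqb : ∀ i, 0 ≤ qb i) (hcover : ∀ i, h i ≤ a i * q) (hq : ∀ i, q < qb i)
    (hfbar : ∀ i x, 0 ≤ x → fbar i (Function.update 0 i x) ≤ 1) :
    NashP2 n a h 0 q qb fbar 0 := by
  refine fun i => ⟨fun _ => ⟨feasP2_zero (ha i) (hh i) (hqb i) (hcover i) (hq i), ?_⟩,
    fun hlt =>
      absurd hlt (not_lt.2 ((hcover i).trans (mul_le_mul_of_nonneg_left (hq i).le (ha i))))⟩
  rintro x ⟨⟨hx, -⟩, -, -⟩
  rw [obj_zero_rate, obj_zero_rate, Function.update_self]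
  simpa using mul_nonneg hx (sub_nonneg.2 (hfbar i x hx))

theorem nashP2_of_forall_lt {r : ℝ} {fbar : Fin n → (Fin n → ℝ) → ℝ}
    (hforced : ∀ i, a i * qb i < h i) : NashP2 n a h r q qb fbar a :=
  fun i => ⟨fun hle => absurd (hforced i) (not_lt.2 hle), fun _ => rfl⟩

end NashP2

theorem sum_update_zero_fin_two (i : Fin 2) (x : ℝ) :
    Function.update (0 : Fin 2 → ℝ) i x 0 + Function.update (0 : Fin 2 → ℝ) i x 1 = x := by
  fin_cases i <;> simp

/-- Example 2.5: with two identical banks, `r = 0`, `0.5a < h < 0.7a`,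
`f̄₁(s) = f̄₂(s) = 1 − (s₁+s₂)/(4a)` and `g(x) = 0.7 − x/(4a)`, both `s** = (0,0)` with
prices `(0.7, 1, 1)` and `s** = (a,a)` with prices `(0.2, 0.5, 0.5)` are clearing
solutions; in particular the clearing solution is not unique. -/
theorem two_bank_nonuniqueness_counterexample
    (a h : ℝ) (ha : 0 < a) (hh1 : 0.5 * a < h) (hh2 : h < 0.7 * a)
    (fbar : Fin 2 → (Fin 2 → ℝ) → ℝ)
    (hfbar : fbar = fun _ s => 1 - (s 0 + s 1) / (4*a))
    (g : ℝ → ℝ) (hg : g = fun x => 0.7 - x / (4*a)) :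
    (memD 2 (fun _ => a) (fun _ => 0) ∧
      NashP2 2 (fun _ => a) (fun _ => h) 0 0.7 (fun _ => 1) fbar (fun _ => 0) ∧
      g (∑ i : Fin 2, (0 : ℝ)) = 0.7 ∧
      (∀ i : Fin 2, fbar i (fun _ => 0) = 1)) ∧
    (memD 2 (fun _ => a) (fun _ => a) ∧
      NashP2 2 (fun _ => a) (fun _ => h) 0 0.2 (fun _ => 0.5) fbar (fun _ => a) ∧
      g (∑ i : Fin 2, a) = 0.2 ∧
      (∀ i : Fin 2, fbar i (fun _ => a) = 0.5)) ∧
    (fun _ : Fin 2 => (0 : ℝ)) ≠ (fun _ : Fin 2 => a) := by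
  subst hfbar hg
  have hfbar_le_one (i : Fin 2) (x : ℝ) (hx : 0 ≤ x) :
      1 - (Function.update (0 : Fin 2 → ℝ) i x 0 + Function.update (0 : Fin 2 → ℝ) i x 1) /
        (4 * a) ≤ 1 := by
    rw [sum_update_zero_fin_two]
    linarith [div_nonneg hx (by linarith : (0 : ℝ) ≤ 4 * a)]
  refine ⟨⟨fun _ => ⟨le_rfl, ha.le⟩, ?_, by norm_num, fun _ => by norm_num⟩,
    ⟨fun _ => ⟨ha.le, le_rfl⟩, nashP2_of_forall_lt fun _ => by linarith, ?_, fun _ => ?_⟩,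
    fun heq => ha.ne (congrFun heq 0)⟩
  · exact nashP2_zero (fun _ => ha.le) (fun _ => by linarith) (fun _ => zero_le_one)
      (fun _ => by linarith) (fun _ => by norm_num) hfbar_le_one
  · simp only [Fin.sum_univ_two]; field_simp; norm_num
  · field_simp; norm_num
end
end
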